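/- arXiv:0905.2674 — 4 statements merged into one kernel-verified Lean document; each statement's English description precedes it below -/
import Mathlib

section
/- Let G be a finite group that contains a normal subgroup A such that C_G(A) ≤ A and such that [A, x] is a normal subset of A for every small element x of G. Then M(G) is nilpotent of nilpotency class at most 3. -/
/-- The size of the conjugacy class of `x` in `G`. -/
noncomputable def classCard {G : Type*} [Group G] (x : G) : ℕ := Nat.card (conjugatesOf x)

/-- An element `x` is *small* if its conjugacy class size is among the two smallest
conjugacy class sizes of `G`, i.e. at most one conjugacy class size is strictly
smaller than that of `x`. -/
def IsSmall {G : Type*} [Group G] (x : G) : Prop :=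
  {n : ℕ | (∃ g : G, classCard g = n) ∧ n < classCard x}.Subsingleton

/-- `M G` is the subgroup generated by all small elements of `G`. -/
def smallGen (G : Type*) [Group G] : Subgroup G := Subgroup.closure {x : G | IsSmall x}

/-- `[x, K] = {x⁻¹k⁻¹xk : k ∈ K}`. -/
def commSet {G : Type*} [Group G] (x : G) (K : Set G) : Set G :=
  {y | ∃ k ∈ K, y = x⁻¹ * k⁻¹ * x * k}

/-- `[A, x] = {a⁻¹x⁻¹ax : a ∈ A}`. -/
def commSet' {G : Type*} [Group G] (A : Set G) (x : G) : Set G :=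
  {y | ∃ a ∈ A, y = a⁻¹ * x⁻¹ * a * x}

/-- `S` is a normal subset of `K`: `k⁻¹Sk = S` for all `k ∈ K`. -/
def IsNormalSubsetOf {G : Type*} [Group G] (S K : Set G) : Prop :=
  ∀ k ∈ K, (fun s => k⁻¹ * s * k) '' S = S

/-- The Fitting subgroup: the join of all nilpotent normal subgroups (for a finite
group, its largest nilpotent normal subgroup). -/
def fittingSubgroup (G : Type*) [Group G] : Subgroup G :=
  ⨆ H ∈ {H : Subgroup G | H.Normal ∧ Group.IsNilpotent ↥H}, H

/-!
For a small non-central `x`, normality of `[A, x]` in `A` makes it a subgroup normalized by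
`N = A C_G(x)`, and the `N`-class of `x` is the coset `x [A, x]`. Hence `|x^G| = |G : N| |[A, x]|`,
while a non-central `t ∈ [A, x]` has `|t^G| ≤ |G : N| |t^N| < |G : N| |[A, x]|` because `t^N`
misses `1`. As `x` is small, no such `t` exists: `[A, x] ≤ Z(G)`. So `[A, M(G)] ≤ Z(G)`, the
three subgroups lemma gives `[M, M] ≤ C_G(A) ≤ A`, whence `[M, M, M] ≤ [A, M] ≤ Z(G)` and
`γ₄(M) = 1`.
-/

open Subgroup
open scoped commutatorElement

section
variable {G : Type*} [Group G]

theorem Subgroup.relIndex_centralizer_eq_ncard (H : Subgroup G) (t : G) :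
    (centralizer {t}).relIndex H = ((fun h => h * t * h⁻¹) '' H).ncard := by
  set f : G →* ConjAct G := (ConjAct.toConjAct : G ≃* ConjAct G).toMonoidHom
  have hstab : (MulAction.stabilizer (ConjAct G) t).subgroupOf (H.map f) =
      MulAction.stabilizer (H.map f) t := rfl
  have horbit : MulAction.orbit (H.map f) t = (fun h => h * t * h⁻¹) '' H := by
    ext y
    constructor
    · rintro ⟨⟨_, h, hh, rfl⟩, rfl⟩
      exact ⟨h, hh, rfl⟩
    · rintro ⟨h, hh, rfl⟩
      exact ⟨⟨f h, h, hh, rfl⟩, rfl⟩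
  have hcent : centralizer {t} = (MulAction.stabilizer (ConjAct G) t).comap f :=
    centralizer_eq_comap_stabilizer t
  rw [hcent, relIndex_comap, relIndex, hstab, MulAction.index_stabilizer, horbit]

theorem classCard_eq_index_centralizer (x : G) : classCard x = (centralizer {x}).index := by
  rw [← relIndex_top_right, relIndex_centralizer_eq_ncard, classCard, ← Nat.card_coe_set_eq]
  congr
  ext y
  simp [conjugatesOf, isConj_iff]

theorem classCard_eq_one_iff {x : G} : classCard x = 1 ↔ x ∈ center G := by
  rw [classCard_eq_index_centralizer, index_eq_one, centralizer_eq_top_iff_subset,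
    Set.singleton_subset_iff, SetLike.mem_coe]

theorem classCard_pos [Finite G] (x : G) : 0 < classCard x := by
  rw [classCard_eq_index_centralizer]
  exact Nat.pos_of_ne_zero index_ne_zero_of_finite

theorem IsSmall.classCard_le [Finite G] {x g : G} (hx : IsSmall x) (hxZ : x ∉ center G)
    (hgZ : g ∉ center G) : classCard x ≤ classCard g := by
  by_contra! hlt
  have h1 : 1 < classCard x := by
    have := classCard_pos x
    have := mt classCard_eq_one_iff.mp hxZ
    omega
  exact hgZ (classCard_eq_one_iff.mp
    (hx ⟨⟨g, rfl⟩, hlt⟩ ⟨⟨1, classCard_eq_one_iff.mpr (one_mem _)⟩, h1⟩))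

theorem index_centralizer_le_relIndex_mul_index [Finite G] (N : Subgroup G) (t : G) :
    (centralizer {t}).index ≤ (centralizer {t}).relIndex N * N.index := by
  rw [← inf_relIndex_right, relIndex_mul_index inf_le_right]
  exact index_antitone inf_le_left

theorem classCard_lt_of_conj_image_eq [Finite G] {S N : Subgroup G} {x t : G}
    (hxN : centralizer {x} ≤ N) (hNS : N ≤ normalizer (S : Set G))
    (hx : (fun n => n * x * n⁻¹) '' N = (x * ·) '' S) (htS : t ∈ S) (ht1 : t ≠ 1) :
    classCard t < classCard x := by
  have hconj_sub : (fun n => n * t * n⁻¹) '' N ⊂ S := by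
    refine (Set.ssubset_iff_of_subset ?_).mpr ⟨1, one_mem S, ?_⟩
    · rintro _ ⟨n, hn, rfl⟩
      exact (mem_normalizer_iff.mp (hNS hn) t).mp htS
    · rintro ⟨n, -, hn⟩
      exact ht1 (by simpa using hn)
  have hx_card : (centralizer {x}).relIndex N = (S : Set G).ncard := by
    rw [relIndex_centralizer_eq_ncard, hx, Set.ncard_image_of_injective _ (mul_right_injective x)]
  calc classCard t ≤ (centralizer {t}).relIndex N * N.index := by
        rw [classCard_eq_index_centralizer]
        exact index_centralizer_le_relIndex_mul_index N t
    _ < (S : Set G).ncard * N.index := by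
        rw [relIndex_centralizer_eq_ncard]
        exact Nat.mul_lt_mul_of_pos_right (Set.ncard_lt_ncard hconj_sub)
          (Nat.pos_of_ne_zero index_ne_zero_of_finite)
    _ = classCard x := by
        rw [classCard_eq_index_centralizer, ← relIndex_mul_index hxN, hx_card]

theorem le_normalizer_of_conj_mem {S : Set G} {K : Subgroup G}
    (h : ∀ k ∈ K, ∀ s ∈ S, k * s * k⁻¹ ∈ S) : K ≤ normalizer S := by
  intro k hk
  refine mem_set_normalizer_iff.mpr fun s => ⟨h k hk s, fun hs => ?_⟩
  simpa [mul_assoc] using h k⁻¹ (inv_mem hk) _ hs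

theorem IsNormalSubsetOf.conj_mem {S K : Set G} (h : IsNormalSubsetOf S K) {k s : G} (hk : k ∈ K)
    (hs : s ∈ S) : k⁻¹ * s * k ∈ S :=
  h k hk ▸ ⟨s, hs, rfl⟩

theorem IsNormalSubsetOf.le_normalizer {S : Set G} {K : Subgroup G} (h : IsNormalSubsetOf S K) :
    K ≤ normalizer S :=
  le_normalizer_of_conj_mem fun k hk s hs => by simpa using h.conj_mem (inv_mem hk) hs

def commSubgroup (A : Subgroup G) (x : G) (h : IsNormalSubsetOf (commSet' A x) A) :
    Subgroup G where
  carrier := commSet' A x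
  one_mem' := ⟨1, one_mem A, by group⟩
  mul_mem' := by
    rintro s _ hs ⟨b, hb, rfl⟩
    obtain ⟨a, ha, hsb⟩ : b * s * b⁻¹ ∈ commSet' A x := by
      simpa using h.conj_mem (inv_mem hb) hs
    refine ⟨a * b, mul_mem ha hb, ?_⟩
    rw [show s = b⁻¹ * (b * s * b⁻¹) * b by group, hsb]
    group
  inv_mem' := by
    rintro _ ⟨a, ha, rfl⟩
    have := h.conj_mem ha ⟨a⁻¹, inv_mem ha, rfl⟩
    convert this using 1
    group

theorem centralizer_le_normalizer_commSet' {A : Subgroup G} (hA : A.Normal) (x : G) :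
    centralizer {x} ≤ normalizer (commSet' A x) := by
  refine le_normalizer_of_conj_mem ?_
  rintro c hc _ ⟨a, ha, rfl⟩
  have hcx : c * x * c⁻¹ = x := by rw [mem_centralizer_singleton_iff.mp hc, mul_inv_cancel_right]
  refine ⟨c * a * c⁻¹, hA.conj_mem a ha c, ?_⟩
  calc c * (a⁻¹ * x⁻¹ * a * x) * c⁻¹
      = (c * a * c⁻¹)⁻¹ * (c * x * c⁻¹)⁻¹ * (c * a * c⁻¹) * (c * x * c⁻¹) := by group
    _ = (c * a * c⁻¹)⁻¹ * x⁻¹ * (c * a * c⁻¹) * x := by rw [hcx]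

theorem conj_image_sup_centralizer {A : Subgroup G} (hA : A.Normal) (x : G)
    (h : IsNormalSubsetOf (commSet' A x) A) :
    (fun n => n * x * n⁻¹) '' ↑(A ⊔ centralizer {x}) = (x * ·) '' (commSubgroup A x h) := by
  have key : ∀ a ∈ A, a * x * a⁻¹ ∈ (x * ·) '' (commSubgroup A x h) := by
    intro a ha
    refine ⟨x⁻¹ * a * x * a⁻¹, ?_, by group⟩
    have : a * x⁻¹ * a⁻¹ * x ∈ commSubgroup A x h := ⟨a⁻¹, inv_mem ha, by group⟩
    rw [SetLike.mem_coe, show x⁻¹ * a * x * a⁻¹ = (a * x⁻¹ * a⁻¹ * x)⁻¹ by group]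
    exact inv_mem this
  ext y
  constructor
  · rintro ⟨_, hn, rfl⟩
    rw [normal_mul] at hn
    obtain ⟨a, ha, c, hc, rfl⟩ := hn
    have hcx : c * x * c⁻¹ = x := by rw [mem_centralizer_singleton_iff.mp hc, mul_inv_cancel_right]
    dsimp only
    rw [show a * c * x * (a * c)⁻¹ = a * (c * x * c⁻¹) * a⁻¹ by group, hcx]
    exact key a ha
  · rintro ⟨s, hs, rfl⟩
    obtain ⟨b, hb, hsb⟩ := inv_mem hs
    refine ⟨b⁻¹, mem_sup_left (inv_mem hb), ?_⟩
    rw [show s = (s⁻¹)⁻¹ by group, hsb]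
    group

theorem IsSmall.commSet'_subset_center [Finite G] {A : Subgroup G} (hA : A.Normal) {x : G}
    (hx : IsSmall x) (h : IsNormalSubsetOf (commSet' A x) A) : commSet' A x ⊆ center G := by
  intro t ht
  by_contra htZ
  have hxZ : x ∉ center G := by
    intro hxZ
    obtain ⟨a, -, rfl⟩ := ht
    refine htZ ?_
    rw [mul_assoc a⁻¹, ← mem_center_iff.mp (inv_mem hxZ) a]
    simp [one_mem]
  have hlt : classCard t < classCard x :=
    classCard_lt_of_conj_image_eq (S := commSubgroup A x h) le_sup_right
      (sup_le h.le_normalizer (centralizer_le_normalizer_commSet' hA x))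
      (conj_image_sup_centralizer hA x h) ht (by rintro rfl; exact htZ (one_mem _))
  exact (hx.classCard_le hxZ htZ).not_gt hlt

theorem commutator_closure_le {A N : Subgroup G} [N.Normal] {X : Set G}
    (h : ∀ a ∈ A, ∀ x ∈ X, ⁅a, x⁆ ∈ N) : ⁅A, closure X⁆ ≤ N := by
  rw [← QuotientGroup.ker_mk' N, ← Subgroup.map_eq_bot_iff, map_commutator, commutator_comm,
    commutator_eq_bot_iff_le_centralizer, map_le_iff_le_comap, closure_le]
  rintro x hx _ ⟨a, ha, rfl⟩
  rw [← commutatorElement_eq_one_iff_mul_comm, ← map_commutatorElement, QuotientGroup.mk'_apply,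
    QuotientGroup.eq_one_iff]
  exact h a ha x hx

theorem commutator_le_center_smallGen [Finite G] {A : Subgroup G} (hA : A.Normal)
    (hns : ∀ x : G, IsSmall x → IsNormalSubsetOf (commSet' (A : Set G) x) (A : Set G)) :
    ⁅A, smallGen G⁆ ≤ center G := by
  refine commutator_closure_le fun a ha x hx => ?_
  have hz : a * x⁻¹ * a⁻¹ * x ∈ center G :=
    hx.commSet'_subset_center hA (hns x hx) ⟨a⁻¹, inv_mem ha, by group⟩
  rw [show ⁅a, x⁆ = x * (a * x⁻¹ * a⁻¹ * x)⁻¹ * x⁻¹ by rw [commutatorElement_def]; group]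
  exact Normal.conj_mem inferInstance _ (inv_mem hz) x

theorem lowerCentralSeries_three_eq_bot {A M : Subgroup G} (hC : centralizer (A : Set G) ≤ A)
    (hAM : ⁅A, M⁆ ≤ center G) : M.lowerCentralSeries 3 = ⊥ := by
  have hMA : ⁅M, A⁆ ≤ center G := commutator_comm M A ▸ hAM
  have hMM : ⁅M, M⁆ ≤ A := by
    refine le_trans ?_ hC
    rw [← commutator_eq_bot_iff_le_centralizer]
    refine commutator_commutator_eq_bot_of_rotate ?_ ?_
    · exact eq_bot_iff.mpr ((commutator_mono hMA le_rfl).trans (commutator_center_left M).le)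
    · exact eq_bot_iff.mpr ((commutator_mono hAM le_rfl).trans (commutator_center_left M).le)
  show ⁅⁅⁅M, M⁆, M⁆, M⁆ = ⊥
  exact eq_bot_iff.mpr <| (commutator_mono ((commutator_mono hMM le_rfl).trans hAM) le_rfl).trans
    (commutator_center_left M).le

end

/-- If a finite group `G` has a normal subgroup `A` with `C_G(A) ≤ A` such that `[A, x]`
is a normal subset of `A` for every small element `x` of `G`, then `M(G)` is nilpotent
of class at most `3`. -/
theorem stmt_0 {G : Type*} [Group G] [Finite G] (A : Subgroup G) (hA : A.Normal)
    (hC : Subgroup.centralizer (A : Set G) ≤ A)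
    (hns : ∀ x : G, IsSmall x → IsNormalSubsetOf (commSet' (A : Set G) x) (A : Set G)) :
    Group.IsNilpotent ↥(smallGen G) ∧ (⊤ : Subgroup ↥(smallGen G)).lowerCentralSeries 3 = ⊥ := by
  have hM := lowerCentralSeries_three_eq_bot hC (commutator_le_center_smallGen hA hns)
  have hlcs : (⊤ : Subgroup ↥(smallGen G)).lowerCentralSeries 3 = ⊥ := by
    rwa [← map_subtype_inj, Subgroup.map_bot, top_subtype_lowerCentralSeries]
  exact ⟨Subgroup.nilpotent_iff_lowerCentralSeries.mpr ⟨3, hlcs⟩, hlcs⟩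
end

section
/- Let G be a finite group such that C_G(F(G)) ≤ F(G) and such that [x, F(G)] is a normal subset of F(G) for every small element x of G. Then M(G) is nilpotent of nilpotency class at most 2. -/
open Subgroup
open scoped commutatorElement

section ClassSize

variable {G : Type*} [Group G]

theorem relIndex_centralizer_eq_ncard_conj_image (H : Subgroup G) (y : G) :
    (centralizer {y}).relIndex H = ((fun h => h * y * h⁻¹) '' (H : Set G)).ncard := by
  let _ : MulAction H G := MulAction.compHom G (MulAut.conj.comp H.subtype)
  have hsmul (h : H) : h • y = h * y * (h : G)⁻¹ := rfl
  have hstab : MulAction.stabilizer H y = (centralizer {y}).subgroupOf H := by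
    ext h
    rw [MulAction.mem_stabilizer_iff, hsmul, mem_subgroupOf, mem_centralizer_singleton_iff,
      mul_inv_eq_iff_eq_mul]
  have horbit : MulAction.orbit H y = (fun h => h * y * h⁻¹) '' H := by
    ext z
    simp [MulAction.mem_orbit_iff, hsmul]
  rw [relIndex, ← hstab, MulAction.index_stabilizer, horbit]

theorem card_inf_mul_relIndex (K H : Subgroup G) :
    Nat.card ↥(K ⊓ H) * K.relIndex H = Nat.card H := by
  simpa only [relIndex_bot_left, inf_relIndex_right] using
    relIndex_mul_relIndex ⊥ (K ⊓ H) H bot_le inf_le_right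

theorem classCard_mul_card_centralizer [Finite G] (y : G) :
    classCard y * Nat.card (centralizer {y}) = Nat.card G := by
  have hconj : (fun h => h * y * h⁻¹) '' ((⊤ : Subgroup G) : Set G) = conjugatesOf y := by
    ext z
    simp [conjugatesOf, isConj_iff]
  rw [classCard, ← hconj, Nat.card_coe_set_eq, ← relIndex_centralizer_eq_ncard_conj_image,
    relIndex_top_right, index_mul_card]

theorem card_centralizer_lt_of_ncard_conj_image_lt [Finite G] {H : Subgroup G} {x y : G}
    (hxH : centralizer {x} ≤ H)
    (h : ((fun g => g * y * g⁻¹) '' (H : Set G)).ncard <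
      ((fun g => g * x * g⁻¹) '' (H : Set G)).ncard) :
    Nat.card (centralizer {x}) < Nat.card (centralizer {y}) := by
  rw [← relIndex_centralizer_eq_ncard_conj_image,
    ← relIndex_centralizer_eq_ncard_conj_image] at h
  have hx := card_inf_mul_relIndex (centralizer {x}) H
  have hy := card_inf_mul_relIndex (centralizer {y}) H
  rw [inf_of_le_left hxH] at hx
  have hxy : Nat.card (centralizer {x}) < Nat.card ↥(centralizer {y} ⊓ H) := by
    by_contra! hle
    have := Nat.mul_lt_mul_of_le_of_lt hle h Nat.card_pos
    omega
  exact hxy.trans_le (card_le_of_le inf_le_left)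

theorem IsSmall.mem_center_of_card_centralizer_lt [Finite G] {x y : G} (hx : IsSmall x)
    (h : Nat.card (centralizer {x}) < Nat.card (centralizer {y})) : y ∈ center G := by
  have hG : 0 < Nat.card G := Nat.card_pos
  have hx' := classCard_mul_card_centralizer x
  have hy' := classCard_mul_card_centralizer y
  have h1 := classCard_mul_card_centralizer (1 : G)
  rw [centralizer_eq_top_iff_subset.mpr (by simp), card_top] at h1
  have hone : classCard (1 : G) = 1 := Nat.eq_of_mul_eq_mul_right hG (h1.trans (one_mul _).symm)
  have hypos : 0 < classCard y := Nat.pos_of_ne_zero fun h0 => by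
    rw [h0, zero_mul] at hy'
    omega
  have hyx : classCard y < classCard x := by
    by_contra! hle
    have := Nat.mul_lt_mul_of_le_of_lt hle h hypos
    omega
  have hy1 : classCard y = 1 := hx ⟨⟨y, rfl⟩, hyx⟩ ⟨⟨1, hone⟩, by omega⟩
  rw [hy1, one_mul, card_eq_iff_eq_top, centralizer_eq_top_iff_subset] at hy'
  exact hy' rfl

end ClassSize

section SmallCommutators

variable {G : Type*} [Group G]

theorem le_normalizer_of_isNormalSubsetOf {N : Subgroup G} {S : Set G}
    (hS : IsNormalSubsetOf S N) : N ≤ normalizer S := fun n hn =>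
  mem_set_normalizer_iff''.mpr fun s =>
    ⟨fun hs => hS n hn ▸ ⟨s, hs, rfl⟩,
      fun hs => hS n⁻¹ (inv_mem hn) ▸ ⟨_, hs, by group⟩⟩

variable (N : Subgroup G) [N.Normal]

theorem conj_mem_commSet_of_mem_centralizer {x c s : G} (hc : c ∈ centralizer {x})
    (hs : s ∈ commSet x N) : c * s * c⁻¹ ∈ commSet x N := by
  obtain ⟨n, hn, rfl⟩ := hs
  have hcx : c * x * c⁻¹ = x := by rw [mem_centralizer_singleton_iff.mp hc, mul_inv_cancel_right]
  refine ⟨c * n * c⁻¹, Normal.conj_mem inferInstance n hn c, ?_⟩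
  calc c * (x⁻¹ * n⁻¹ * x * n) * c⁻¹
      = (c * x * c⁻¹)⁻¹ * (c * n * c⁻¹)⁻¹ * (c * x * c⁻¹) * (c * n * c⁻¹) := by
        group
    _ = x⁻¹ * (c * n * c⁻¹)⁻¹ * x * (c * n * c⁻¹) := by rw [hcx]

theorem centralizer_le_normalizer_commSet (x : G) :
    centralizer {x} ≤ normalizer (commSet x N) := fun c hc s =>
  ⟨conj_mem_commSet_of_mem_centralizer N hc, fun hs => by
    simpa [mul_assoc] using conj_mem_commSet_of_mem_centralizer N (inv_mem hc) hs⟩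

theorem IsSmall.commSet_subset_center [Finite G] {x : G} (hx : IsSmall x)
    (hK : IsNormalSubsetOf (commSet x N) N) : commSet x N ⊆ center G := by
  intro k hk
  by_cases hk1 : k = 1
  · exact hk1 ▸ one_mem _
  set K := commSet x N
  set H := normalizer K
  have hone : (1 : G) ∈ K := ⟨1, one_mem N, by group⟩
  have hkH : (fun h => h * k * h⁻¹) '' (H : Set G) ⊆ K \ {1} := by
    rintro _ ⟨h, hh, rfl⟩
    exact ⟨(hh k).mp hk, by simpa using hk1⟩
  have hxH : (fun s => x * s) '' K ⊆ (fun h => h * x * h⁻¹) '' (H : Set G) := by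
    rintro _ ⟨_, ⟨n, hn, rfl⟩, rfl⟩
    exact ⟨n⁻¹, le_normalizer_of_isNormalSubsetOf hK (inv_mem hn), by group⟩
  refine hx.mem_center_of_card_centralizer_lt
    (card_centralizer_lt_of_ncard_conj_image_lt (centralizer_le_normalizer_commSet N x) ?_)
  calc ((fun h => h * k * h⁻¹) '' (H : Set G)).ncard
      ≤ (K \ {1}).ncard := Set.ncard_le_ncard hkH
    _ < K.ncard := Set.ncard_sdiff_singleton_lt_of_mem hone
    _ = ((fun s => x * s) '' K).ncard :=
        (Set.ncard_image_of_injective K (mul_right_injective x)).symm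
    _ ≤ _ := Set.ncard_le_ncard hxH

end SmallCommutators

section CentralAction

variable {G : Type*} [Group G]

def Subgroup.centralizerModCenter (N : Subgroup G) : Subgroup G :=
  (centralizer (N.map (QuotientGroup.mk' (center G)) : Set (G ⧸ center G))).comap
    (QuotientGroup.mk' (center G))

theorem Subgroup.mem_centralizerModCenter {N : Subgroup G} {g : G} :
    g ∈ centralizerModCenter N ↔ ∀ n ∈ N, ⁅g, n⁆ ∈ center G := by
  simp only [centralizerModCenter, mem_comap, mem_centralizer_iff, SetLike.mem_coe, mem_map,
    forall_exists_index, and_imp, forall_apply_eq_imp_iff₂]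
  refine forall₂_congr fun n _ => ?_
  rw [← QuotientGroup.eq_one_iff, ← QuotientGroup.mk'_apply, map_commutatorElement,
    commutatorElement_eq_one_iff_mul_comm, eq_comm]

instance (N : Subgroup G) [N.Normal] : (centralizerModCenter N).Normal :=
  have : (N.map (QuotientGroup.mk' (center G))).Normal :=
    Normal.map inferInstance _ (QuotientGroup.mk'_surjective _)
  Normal.comap inferInstance _

theorem commutator_centralizerModCenter_le_center (N : Subgroup G) :
    ⁅centralizerModCenter N, N⁆ ≤ center G :=
  commutator_le.mpr fun _ hg => mem_centralizerModCenter.mp hg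

theorem IsSmall.mem_centralizerModCenter [Finite G] {N : Subgroup G} [N.Normal] {x : G}
    (hx : IsSmall x) (hK : IsNormalSubsetOf (commSet x N) N) : x ∈ centralizerModCenter N := by
  rw [← inv_mem_iff, Subgroup.mem_centralizerModCenter]
  exact fun n hn => hx.commSet_subset_center N hK ⟨n⁻¹, inv_mem hn, by group⟩

theorem commutator_le_centralizer_of_commutator_le_center {H N : Subgroup G}
    (h : ⁅H, N⁆ ≤ center G) : ⁅H, H⁆ ≤ centralizer N := by
  have hZ : ⁅center G, H⁆ = ⊥ :=
    commutator_eq_bot_iff_le_centralizer.mpr (center_le_centralizer _)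
  rw [← commutator_eq_bot_iff_le_centralizer]
  refine commutator_commutator_eq_bot_of_rotate ?_ ?_
  · exact eq_bot_iff.mpr (hZ ▸ commutator_mono h le_rfl)
  · exact eq_bot_iff.mpr (hZ ▸ commutator_mono (commutator_comm N H ▸ h) le_rfl)

theorem lowerCentralSeries_three_eq_bot_of_commutator_le_center {S N : Subgroup G} (hSN : ⁅S, N⁆ ≤ center G)
    (hCN : centralizer N ≤ N) : S.lowerCentralSeries 3 = ⊥ := by
  refine Subgroup.lowerCentralSeries_succ_eq_bot S ?_
  calc S.lowerCentralSeries 2 = ⁅⁅S, S⁆, S⁆ := rfl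
    _ ≤ ⁅N, S⁆ := commutator_mono
        ((commutator_le_centralizer_of_commutator_le_center hSN).trans hCN) le_rfl
    _ ≤ center G := commutator_comm N S ▸ hSN

theorem lowerCentralSeries_two_eq_bot_of_commutator_le_center {S N : Subgroup G} (hSN : ⁅S, N⁆ ≤ center G)
    (hS : S ≤ N) : S.lowerCentralSeries 2 = ⊥ := by
  rw [eq_bot_iff, ← (commutator_eq_bot_iff_le_centralizer (H₂ := N)).mpr le_rfl]
  exact commutator_mono (commutator_le_centralizer_of_commutator_le_center hSN) hS

end CentralAction

section Fitting

variable {G : Type*} [Group G]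

instance : (fittingSubgroup G).Normal :=
  biSup_normal _ id fun _ hH => hH.1

theorem le_fittingSubgroup {H : Subgroup G} [H.Normal] [Group.IsNilpotent H] :
    H ≤ fittingSubgroup G :=
  le_iSup₂_of_le (f := fun K (_ : K ∈ {H : Subgroup G | H.Normal ∧ Group.IsNilpotent H}) => K)
    H ⟨inferInstance, inferInstance⟩ le_rfl

theorem centralizerModCenter_fittingSubgroup_lowerCentralSeries_two
    (hC : centralizer (fittingSubgroup G : Set G) ≤ fittingSubgroup G) :
    (centralizerModCenter (fittingSubgroup G)).lowerCentralSeries 2 = ⊥ := by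
  have hSF := commutator_centralizerModCenter_le_center (fittingSubgroup G)
  have : Group.IsNilpotent (centralizerModCenter (fittingSubgroup G)) :=
    isNilpotent_of_lowerCentralSeries_eq_bot (lowerCentralSeries_three_eq_bot_of_commutator_le_center hSF hC)
  exact lowerCentralSeries_two_eq_bot_of_commutator_le_center hSF le_fittingSubgroup

end Fitting

/-- If `C_G(F(G)) ≤ F(G)` and `[x, F(G)]` is a normal subset of `F(G)` for every small
element `x` of the finite group `G`, then `M(G)` is nilpotent of class at most `2`. -/
theorem stmt_3 {G : Type*} [Group G] [Finite G]
    (hC : Subgroup.centralizer (fittingSubgroup G : Set G) ≤ fittingSubgroup G)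
    (hns : ∀ x : G, IsSmall x →
      IsNormalSubsetOf (commSet x (fittingSubgroup G : Set G)) (fittingSubgroup G : Set G)) :
    Group.IsNilpotent ↥(smallGen G) ∧ Subgroup.lowerCentralSeries (⊤ : Subgroup ↥(smallGen G)) 2 = ⊥ := by
  have hM : smallGen G ≤ centralizerModCenter (fittingSubgroup G) :=
    closure_le _ |>.mpr fun x hx => IsSmall.mem_centralizerModCenter hx (hns x hx)
  have hM2 : (smallGen G).lowerCentralSeries 2 = ⊥ := eq_bot_iff.mpr <|
    centralizerModCenter_fittingSubgroup_lowerCentralSeries_two hC ▸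
      lowerCentralSeries_mono 2 hM
  have htop : Subgroup.lowerCentralSeries (⊤ : Subgroup (smallGen G)) 2 = ⊥ := by
    rwa [← map_subtype_inj, Subgroup.map_bot, top_subtype_lowerCentralSeries]
  exact ⟨Subgroup.nilpotent_iff_lowerCentralSeries.mpr ⟨2, htop⟩, htop⟩
end

section
/- Let G be a finite group, let K be a normal subgroup of G, and let x ∈ G be an element not lying in the center Z(G) such that [x, K] is a normal subset of K. Then for every y ∈ [x, K], the centralizer orders satisfy |C_G(y)| > |C_G(x)|. -/
open MulAction ConjAct Pointwise

theorem MulAction.card_stabilizer_lt_of_ncard_orbit_lt {Γ α : Type*} [Group Γ] [Finite Γ]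
    [MulAction Γ α] {Δ : Subgroup Γ} {a b : α} (ha : stabilizer Γ a ≤ Δ)
    (hab : (orbit Δ b).ncard < (orbit Δ a).ncard) :
    Nat.card (stabilizer Γ a) < Nat.card (stabilizer Γ b) := by
  have orbit_mul_stabilizer (c : α) :
      (orbit Δ c).ncard * Nat.card ((stabilizer Γ c).subgroupOf Δ) = Nat.card Δ := by
    rw [← index_stabilizer]; exact Subgroup.index_mul_card _
  have hstab_a : Nat.card ((stabilizer Γ a).subgroupOf Δ) = Nat.card (stabilizer Γ a) :=
    Nat.card_congr (Subgroup.subgroupOfEquivOfLe ha).toEquiv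
  have hstab_b : Nat.card ((stabilizer Γ b).subgroupOf Δ) ≤ Nat.card (stabilizer Γ b) :=
    Nat.card_le_card_of_injective (fun g => ⟨g.1.1, g.2⟩)
      fun _ _ h => Subtype.ext (Subtype.ext (congrArg (fun g : stabilizer Γ b => (g : Γ)) h))
  refine Nat.lt_of_mul_lt_mul_left (a := (orbit Δ a).ncard) ?_
  calc (orbit Δ a).ncard * Nat.card (stabilizer Γ a)
      = (orbit Δ b).ncard * Nat.card ((stabilizer Γ b).subgroupOf Δ) := by
        rw [← hstab_a, orbit_mul_stabilizer, orbit_mul_stabilizer]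
    _ ≤ (orbit Δ b).ncard * Nat.card (stabilizer Γ b) := Nat.mul_le_mul_left _ hstab_b
    _ < (orbit Δ a).ncard * Nat.card (stabilizer Γ b) :=
        Nat.mul_lt_mul_of_pos_right hab Nat.card_pos

theorem MulAction.orbit_stabilizer_set_subset {Γ α : Type*} [Group Γ] [MulAction Γ α]
    {s : Set α} {a : α} (ha : a ∈ s) : orbit (stabilizer Γ s) a ⊆ s := by
  rintro _ ⟨g, rfl⟩
  exact (mem_stabilizer_set.mp g.2 a).mpr ha

theorem Subgroup.nat_card_centralizer_lt_of_notMem_center {G : Type*} [Group G] [Finite G]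
    {x : G} (hx : x ∉ center G) : Nat.card (centralizer {x}) < Nat.card G := by
  have hne : centralizer {x} ≠ ⊤ := by
    rwa [Ne, centralizer_eq_top_iff_subset, Set.singleton_subset_iff]
  rw [← (centralizer {x}).card_mul_index]
  exact lt_mul_of_one_lt_right Nat.card_pos (one_lt_index_of_ne_top hne)

instance ConjAct.instFinite {G : Type*} [Finite G] : Finite (ConjAct G) :=
  inferInstanceAs (Finite G)

section commSet
variable {G : Type*} [Group G]

theorem commSet_eq_image (x : G) (K : Set G) :
    commSet x K = (fun k => x⁻¹ * k⁻¹ * x * k) '' K := by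
  ext; simp [commSet, eq_comm]

theorem one_mem_commSet (x : G) {K : Set G} (hK : 1 ∈ K) : 1 ∈ commSet x K :=
  ⟨1, hK, by group⟩

theorem smul_commSet (g : ConjAct G) (x : G) (K : Set G) :
    g • commSet x K = commSet (g • x) (g • K) := by
  simp only [commSet_eq_image, ← Set.image_smul, Set.image_image, smul_mul', smul_inv']

theorem IsNormalSubsetOf.toConjAct_inv_smul {S K : Set G} (h : IsNormalSubsetOf S K) {k : G}
    (hk : k ∈ K) : toConjAct k⁻¹ • S = S := by
  simp only [← Set.image_smul, toConjAct_smul, inv_inv]; exact h k hk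

theorem stabilizer_le_stabilizer_commSet {K : Subgroup G} (hK : K.Normal) (x : G) :
    stabilizer (ConjAct G) x ≤ stabilizer (ConjAct G) (commSet x K) := by
  intro g hg
  rw [mem_stabilizer_iff] at hg ⊢
  rw [smul_commSet, hg, ← Subgroup.coe_pointwise_smul, hK.conjAct]

theorem smul_commSet_subset_orbit {x : G} {K : Set G} (h : IsNormalSubsetOf (commSet x K) K) :
    x • commSet x K ⊆ orbit (stabilizer (ConjAct G) (commSet x K)) x := by
  rintro _ ⟨_, ⟨k, hk, rfl⟩, rfl⟩
  refine ⟨⟨toConjAct k⁻¹, h.toConjAct_inv_smul hk⟩, ?_⟩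
  change toConjAct k⁻¹ • x = x * (x⁻¹ * k⁻¹ * x * k)
  rw [toConjAct_smul]
  group

end commSet

/-- Let `K` be a normal subgroup of a finite group `G` and `x ∉ Z(G)` with `[x, K]` a
normal subset of `K`. Then `|C_G(y)| > |C_G(x)|` for every `y ∈ [x, K]`. -/
theorem stmt_5 {G : Type*} [Group G] [Finite G] (K : Subgroup G) (hK : K.Normal)
    (x : G) (hx : x ∉ Subgroup.center G)
    (hns : IsNormalSubsetOf (commSet x (K : Set G)) (K : Set G)) :
    ∀ y ∈ commSet x (K : Set G),
      Nat.card ↥(Subgroup.centralizer {y}) > Nat.card ↥(Subgroup.centralizer {x}) := by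
  intro y hy
  by_cases hy1 : y = 1
  · subst hy1
    rw [Subgroup.centralizer_eq_top_iff_subset.mpr (by simp), Subgroup.card_top]
    exact Subgroup.nat_card_centralizer_lt_of_notMem_center hx
  set S := commSet x (K : Set G)
  rw [Subgroup.nat_card_centralizer_nat_card_stabilizer,
    Subgroup.nat_card_centralizer_nat_card_stabilizer]
  refine card_stabilizer_lt_of_ncard_orbit_lt (Δ := stabilizer (ConjAct G) S)
    (stabilizer_le_stabilizer_commSet hK x) ?_
  have orbit_y_subset : orbit (stabilizer (ConjAct G) S) y ⊆ S \ {1} := by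
    rintro _ ⟨g, rfl⟩
    refine ⟨orbit_stabilizer_set_subset hy ⟨g, rfl⟩, fun h => hy1 ?_⟩
    simpa using congrArg (g⁻¹ • ·) h
  calc (orbit _ y).ncard ≤ (S \ {1}).ncard := Set.ncard_le_ncard orbit_y_subset
    _ < S.ncard := Set.ncard_sdiff_singleton_lt_of_mem (one_mem_commSet x K.one_mem)
    _ = (x • S).ncard := (Set.ncard_smul_set x S).symm
    _ ≤ (orbit _ x).ncard := Set.ncard_le_ncard (smul_commSet_subset_orbit hns)
end

section
/- Let G be a finite p-group of conjugate rank 1 (all non-central elements of G have the same conjugacy class size). Then G is flat (i.e., [x, G] is a subgroup of G for every x ∈ G) if and only if the nilpotency class of G equals 2. -/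
/-! For a non-central `x` with `[x, G] = H` a subgroup, the conjugacy class of `x` is the coset
`x H`, so every conjugate `y` of `x` has `[y, G] = y⁻¹ x H = H`; hence `H` is normal. If some
`k ∈ H` were non-central, then `[k, G] ⊆ H` and both sets have the common class size, so
`[k, G] = H ∋ k⁻¹`, which forces `k = 1`. Thus all commutators are central, i.e. the class is `2`.
Conversely, in class `2` the map `g ↦ [x, g]` is a homomorphism, so `[x, G]` is its range. -/

open scoped commutatorElement

def IsFlat (G : Type*) [Group G] : Prop :=
  ∀ x : G, ∃ H : Subgroup G, commSet x Set.univ = (H : Set G)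

section

variable {G : Type*} [Group G]

theorem mem_commSet_univ_iff {x z : G} : z ∈ commSet x Set.univ ↔ IsConj x (x * z) := by
  rw [isConj_iff]
  constructor
  · rintro ⟨k, -, rfl⟩
    exact ⟨k⁻¹, by group⟩
  · rintro ⟨c, hc⟩
    refine ⟨c⁻¹, trivial, ?_⟩
    calc z = x⁻¹ * (x * z) := by group
      _ = x⁻¹ * c⁻¹⁻¹ * x * c⁻¹ := by rw [← hc]; group

theorem commSet_univ_eq_image_conjugatesOf (x : G) :
    commSet x Set.univ = (x⁻¹ * ·) '' conjugatesOf x := by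
  ext z
  rw [mem_commSet_univ_iff, Set.image_mul_left, Set.mem_preimage, inv_inv]
  rfl

theorem classCard_eq_ncard_commSet_univ (x : G) : classCard x = (commSet x Set.univ).ncard := by
  rw [commSet_univ_eq_image_conjugatesOf, Set.ncard_image_of_injective _ (mul_right_injective x⁻¹),
    classCard, Nat.card_coe_set_eq]

theorem inv_mem_commSet_univ_iff {k : G} : k⁻¹ ∈ commSet k Set.univ ↔ k = 1 := by
  rw [mem_commSet_univ_iff, mul_inv_cancel, isConj_one_left]

theorem commSet_univ_subset_of_mem {H : Subgroup G} [H.Normal] {k : G} (hk : k ∈ H) :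
    commSet k Set.univ ⊆ H := by
  rintro _ ⟨g, -, rfl⟩
  have hconj : g⁻¹ * k * g ∈ H := by simpa using ‹H.Normal›.conj_mem k hk g⁻¹
  simpa only [SetLike.mem_coe, mul_assoc] using H.mul_mem (H.inv_mem hk) hconj

theorem commSet_univ_eq_of_isConj {H : Subgroup G} {x y : G}
    (hx : commSet x Set.univ = H) (hxy : IsConj x y) : commSet y Set.univ = H := by
  have hxy' : x⁻¹ * y ∈ H := by
    rw [← SetLike.mem_coe, ← hx, mem_commSet_univ_iff, mul_inv_cancel_left]
    exact hxy
  ext z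
  calc z ∈ commSet y Set.univ ↔ IsConj y (y * z) := mem_commSet_univ_iff
    _ ↔ IsConj x (x * (x⁻¹ * y * z)) := by
      rw [mul_assoc x⁻¹, mul_inv_cancel_left]
      exact ⟨hxy.trans, hxy.symm.trans⟩
    _ ↔ x⁻¹ * y * z ∈ H := by rw [← mem_commSet_univ_iff, hx, SetLike.mem_coe]
    _ ↔ z ∈ (H : Set G) := by rw [H.mul_mem_cancel_left hxy', SetLike.mem_coe]

theorem normal_of_commSet_univ_eq {H : Subgroup G} {x : G} (hx : commSet x Set.univ = H) :
    H.Normal where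
  conj_mem n hn g := by
    have hgx : IsConj x (g * x * g⁻¹) := isConj_iff.mpr ⟨g, rfl⟩
    rw [← SetLike.mem_coe, ← hx, mem_commSet_univ_iff] at hn
    rw [← SetLike.mem_coe, ← commSet_univ_eq_of_isConj hx hgx, mem_commSet_univ_iff]
    convert hgx.symm.trans (hn.trans (isConj_iff.mpr ⟨g, rfl⟩)) using 1
    group

theorem commSet_univ_subset_center [Finite G] (hflat : IsFlat G)
    (hrank : ∀ x y : G, x ∉ Subgroup.center G → y ∉ Subgroup.center G →
      classCard x = classCard y)
    (x : G) : commSet x Set.univ ⊆ Subgroup.center G := by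
  by_cases hx : x ∈ Subgroup.center G
  · rintro _ ⟨k, -, rfl⟩
    rw [mul_assoc _ x, ← Subgroup.mem_center_iff.mp hx k]
    simp
  obtain ⟨H, hH⟩ := hflat x
  have := normal_of_commSet_univ_eq hH
  intro k hk
  by_contra hkc
  rw [hH, SetLike.mem_coe] at hk
  have hsub : commSet k Set.univ ⊆ commSet x Set.univ := hH ▸ commSet_univ_subset_of_mem hk
  have heq : commSet k Set.univ = commSet x Set.univ := by
    refine Set.eq_of_subset_of_ncard_le hsub ?_ (Set.toFinite _)
    rw [← classCard_eq_ncard_commSet_univ, ← classCard_eq_ncard_commSet_univ, hrank x k hx hkc]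
  have hk_inv : k⁻¹ ∈ commSet k Set.univ := by
    rw [heq, hH]
    exact H.inv_mem hk
  exact hkc (inv_mem_commSet_univ_iff.mp hk_inv ▸ Subgroup.one_mem _)

theorem isFlat_of_commutator_mem_center (h : ∀ a b : G, ⁅a, b⁆ ∈ Subgroup.center G) :
    IsFlat G := by
  intro x
  let f : G →* G := MonoidHom.mk' (fun k => x⁻¹ * k⁻¹ * x * k) fun g k => calc
    x⁻¹ * (g * k)⁻¹ * x * (g * k) = x⁻¹ * k⁻¹ * x * ⁅x⁻¹, g⁻¹⁆ * k := by
      rw [commutatorElement_def]; group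
    _ = ⁅x⁻¹, g⁻¹⁆ * (x⁻¹ * k⁻¹ * x) * k := by rw [Subgroup.mem_center_iff.mp (h x⁻¹ g⁻¹)]
    _ = x⁻¹ * g⁻¹ * x * g * (x⁻¹ * k⁻¹ * x * k) := by rw [commutatorElement_def]; group
  refine ⟨f.range, ?_⟩
  ext z
  simp [f, commSet, eq_comm]

theorem lowerCentralSeries_two_eq_bot_iff :
    (⊤ : Subgroup G).lowerCentralSeries 2 = ⊥ ↔ ∀ a b : G, ⁅a, b⁆ ∈ Subgroup.center G := by
  rw [Subgroup.lowerCentralSeries_succ, Subgroup.top_lowerCentralSeries_one,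
    Subgroup.commutator_top_right_eq_bot_iff_le_center, commutator, Subgroup.commutator_le]
  simp

theorem top_lowerCentralSeries_one_ne_bot (h : ∃ a b : G, a * b ≠ b * a) :
    (⊤ : Subgroup G).lowerCentralSeries 1 ≠ ⊥ := by
  rw [Subgroup.top_lowerCentralSeries_one, Ne, commutator_eq_bot_iff]
  obtain ⟨a, b, hab⟩ := h
  exact fun hc => hab (hc.is_comm.comm a b)

end

theorem stmt_11_general {G : Type*} [Group G] [Finite G]
    (hna : ∃ a b : G, a * b ≠ b * a)
    (hrank : ∀ x y : G, x ∉ Subgroup.center G → y ∉ Subgroup.center G →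
      classCard x = classCard y) :
    (∀ x : G, ∃ H : Subgroup G, commSet x Set.univ = (H : Set G)) ↔
    ((⊤ : Subgroup G).lowerCentralSeries 2 = ⊥ ∧ (⊤ : Subgroup G).lowerCentralSeries 1 ≠ ⊥) := by
  rw [lowerCentralSeries_two_eq_bot_iff, and_iff_left (top_lowerCentralSeries_one_ne_bot hna)]
  -- Mathlib's `⁅a, b⁆ = a * b * a⁻¹ * b⁻¹` is the element `[a⁻¹, b⁻¹]` of `commSet a⁻¹ Set.univ`.
  refine ⟨fun hflat a b => commSet_univ_subset_center hflat hrank a⁻¹ ⟨b⁻¹, trivial, ?_⟩,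
    isFlat_of_commutator_mem_center⟩
  rw [commutatorElement_def]
  group

/-- A finite `p`-group of conjugate rank `1` is flat (every `[x, G]` is a subgroup)
if and only if its nilpotency class equals `2`. -/
theorem stmt_11 {G : Type*} [Group G] [Finite G] {p : ℕ} [Fact p.Prime]
    (hp : IsPGroup p G) (hna : ∃ a b : G, a * b ≠ b * a)
    (hrank : ∀ x y : G, x ∉ Subgroup.center G → y ∉ Subgroup.center G →
      classCard x = classCard y) :
    (∀ x : G, ∃ H : Subgroup G, commSet x Set.univ = (H : Set G)) ↔
    ((⊤ : Subgroup G).lowerCentralSeries 2 = ⊥ ∧ (⊤ : Subgroup G).lowerCentralSeries 1 ≠ ⊥) :=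
  stmt_11_general hna hrank
end
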